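/- arXiv:1312.3553 — 2 statements merged into one kernel-verified Lean document; each statement's English description precedes it below -/
import Mathlib

section
/- For integers k ≥ 2 and n ≥ 2k-2, F(k,n) = ∑_{i=0}^{k-1} F(k, n-(k-1)-i). -/
/-! Unfolding `F(n) = F(n-1) + F(n-k)` a further `k - 2` times along its first summand gives
`F(n) = F(n-k+1) + F(n-k) + F(n-k-1) + ⋯ + F(n-2k+2)`; the bound `n ≥ 2k - 2` keeps every
unfolded index at least `k`, so the recurrence applies at each step. -/

def genFib (k n : ℕ) : ℕ :=
  if h1 : n < k then n + 1
  else if h2 : k = 0 then 0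
  else genFib k (n - 1) + genFib k (n - k)
  termination_by n
  decreasing_by all_goals omega

def genLucas (k n : ℕ) : ℕ :=
  if n < 2 * k then n + 1
  else (k - 1) * genFib k (n - (2 * k - 1)) + genFib k (n - (k - 1))

lemma genFib_of_le {k n : ℕ} (hk : 0 < k) (hn : k ≤ n) :
    genFib k n = genFib k (n - 1) + genFib k (n - k) := by
  rw [genFib, dif_neg (by omega), dif_neg (by omega)]

lemma genFib_eq_sub_add_sum {k n : ℕ} (j : ℕ) (hk : 0 < k) (hj : j + k ≤ n + 1) :
    genFib k n = genFib k (n - j) + ∑ i ∈ Finset.range j, genFib k (n - i - k) := by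
  induction j with
  | zero => simp
  | succ j ih =>
    rw [ih (by omega), Finset.sum_range_succ, genFib_of_le hk (by omega : k ≤ n - j),
      Nat.sub_sub n j 1]
    ring

theorem stmt3 (k n : ℕ) (hk : 2 ≤ k) (hn : 2 * k - 2 ≤ n) :
    genFib k n = ∑ i ∈ Finset.range k, genFib k (n - (k - 1) - i) := by
  obtain ⟨m, rfl⟩ : ∃ m, k = m + 1 := ⟨k - 1, by omega⟩
  rw [genFib_eq_sub_add_sum m (by omega) (by omega), Finset.sum_range_succ', Nat.add_sub_cancel,
    Nat.sub_zero, add_comm]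
  congr 1
  exact Finset.sum_congr rfl fun i _ => congrArg (genFib _) (by omega)
end

section
/- For integers k ≥ 2 and n ≥ 2k, L(k, nk+1) = ∑_{i=0}^{n} L(k, ik). -/
lemma genFib_of_lt {k n : ℕ} (h : n < k) : genFib k n = n + 1 := by
  rw [genFib, dif_pos h]

/-- For `j + 1 < k` the last index truncates to `0`, where `F(k, 0) = 1` is the step size of the
initial segment. -/
lemma genFib_succ {k : ℕ} (hk : 1 ≤ k) (j : ℕ) :
    genFib k (j + 1) = genFib k j + genFib k (j + 1 - k) := by
  by_cases h : j + 1 < k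
  · rw [genFib_of_lt h, genFib_of_lt (by omega : j < k), Nat.sub_eq_zero_of_le h.le,
      genFib_of_lt (by omega : 0 < k)]
  · rw [genFib, dif_neg h, dif_neg (by omega), Nat.add_sub_cancel]

lemma genLucas_of_lt {k n : ℕ} (h : n < 2 * k) : genLucas k n = n + 1 := by
  rw [genLucas, if_pos h]

lemma genLucas_eq_genFib {k n : ℕ} (hk : 1 ≤ k) (hn : k - 1 ≤ n) :
    genLucas k n = (k - 1) * genFib k (n + 1 - 2 * k) + genFib k (n + 1 - k) := by
  by_cases h : n < 2 * k
  · have hF₀ : genFib k (n + 1 - 2 * k) = 1 := by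
      rw [Nat.sub_eq_zero_of_le (by omega), genFib_of_lt (by omega)]
    have hF₁ : genFib k (n + 1 - k) = n + 2 - k := by
      rcases Nat.lt_or_ge (n + 1 - k) k with h' | h'
      · rw [genFib_of_lt h']
        omega
      · obtain rfl : n = 2 * k - 1 := by omega
        rw [show 2 * k - 1 + 1 - k = k - 1 + 1 by omega, genFib_succ hk,
          genFib_of_lt (by omega : k - 1 < k), Nat.sub_add_cancel hk, Nat.sub_self,
          genFib_of_lt (by omega : 0 < k)]
        omega
    rw [genLucas_of_lt h, hF₀, hF₁]
    omega
  · rw [genLucas, if_neg h, show n - (2 * k - 1) = n + 1 - 2 * k by omega,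
      show n - (k - 1) = n + 1 - k by omega]

lemma genLucas_succ {k m : ℕ} (hk : 1 ≤ k) (hm : 2 * k - 1 ≤ m) :
    genLucas k (m + 1) = genLucas k m + genLucas k (m + 1 - k) := by
  rw [genLucas_eq_genFib hk (by omega), genLucas_eq_genFib hk (by omega),
    genLucas_eq_genFib hk (by omega),
    show m + 1 + 1 - 2 * k = m + 1 - 2 * k + 1 by omega,
    show m + 1 + 1 - k = m + 1 - k + 1 by omega, genFib_succ hk, genFib_succ hk,
    show m + 1 - 2 * k + 1 - k = m + 1 - k + 1 - 2 * k by omega,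
    show m + 1 - k + 1 - k = m + 1 - 2 * k + 1 by omega]
  ring

theorem genLucas_mul_add_one {k n : ℕ} (hk : 2 ≤ k) (hn : 1 ≤ n) :
    genLucas k (n * k + 1) = ∑ i ∈ Finset.range (n + 1), genLucas k (i * k) := by
  induction n, hn using Nat.le_induction with
  | base =>
    rw [Finset.sum_range_succ, Finset.sum_range_one, zero_mul, one_mul,
      genLucas_of_lt (by omega : k + 1 < 2 * k), genLucas_of_lt (by omega : 0 < 2 * k),
      genLucas_of_lt (by omega : k < 2 * k)]
    omega
  | succ n hn ih =>
    have hkn : 2 * k ≤ (n + 1) * k := Nat.mul_le_mul_right k (by omega)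
    rw [Finset.sum_range_succ, ← ih, genLucas_succ (by omega) (by omega),
      show (n + 1) * k + 1 - k = n * k + 1 by rw [add_mul, one_mul]; omega]
    ring

theorem stmt7 (k n : ℕ) (hk : 2 ≤ k) (hn : 2 * k ≤ n) :
    genLucas k (n * k + 1) = ∑ i ∈ Finset.range (n + 1), genLucas k (i * k) :=
  genLucas_mul_add_one hk (by omega)
end
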